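/- Let μ ∈ ℝ and σ > 0, and define f : ℝ → [0,1] by f(x) = σ²/(2((x−μ)₊)²) if (x−μ)/σ ≥ 1 and f(x) = (1 + ((x−μ)₊)²/σ²)^{-1} if (x−μ)/σ < 1 (equivalently, f = min{(2E₀)^{-1}, P₀} with E₀(x) = ((x−μ)₊)²/σ² and P₀(x) = (1+E₀(x))^{-1}). Then: (i) for every Q ∈ H_S(μ,σ) and every α ∈ (0,1), Q({x : f(x) ≤ α}) ≤ α; and (ii) for every α ∈ (0,1/2], sup_{Q∈H_S(μ,σ)} Q({x : f(x) ≤ α}) = α, attained by the three-point measure giving mass α to each of μ ± σ(2α)^{-1/2} and mass 1−2α to μ. That is, f is a semi-precise p-variable for H_S(μ,σ). -/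

import Mathlib

open MeasureTheory Set
open scoped ENNReal

/-- Mean of a distribution on ℝ. -/
noncomputable def distMean (Q : Measure ℝ) : ℝ := ∫ x, x ∂Q

/-- Variance of a distribution on ℝ. -/
noncomputable def distVar (Q : Measure ℝ) : ℝ := ∫ x, (x - distMean Q)^2 ∂Q

/-- `H(μ,σ)`: Borel probability measures on ℝ with finite second moment,
mean at most `μ`, and variance at most `σ²`. -/
def MemH (μ σ : ℝ) (Q : Measure ℝ) : Prop :=
  IsProbabilityMeasure Q ∧ Integrable (fun x => x^2) Q ∧
    distMean Q ≤ μ ∧ distVar Q ≤ σ^2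

/-- A distribution `Q` with mean `m` is symmetric if
`Q((-∞, m−x]) = Q([m+x, ∞))` for all `x`. -/
def IsSymmetricDist (Q : Measure ℝ) : Prop :=
  ∀ x : ℝ, Q (Iic (distMean Q - x)) = Q (Ici (distMean Q + x))

/-- `f = min{(2E₀)⁻¹, P₀}`: equals `σ²/(2((x−μ)₊)²)` when `(x−μ)/σ ≥ 1` and
`(1 + ((x−μ)₊)²/σ²)⁻¹` otherwise. -/
noncomputable def pS (μ σ : ℝ) (x : ℝ) : ℝ :=
  if 1 ≤ (x - μ) / σ then σ^2 / (2 * (max (x - μ) 0)^2)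
  else (1 + (max (x - μ) 0)^2 / σ^2)⁻¹

/-- The three-point measure giving mass `α` to each of `μ ± σ(2α)^{-1/2}`
and mass `1 − 2α` to `μ`. -/
noncomputable def threePointQ (μ σ α : ℝ) : Measure ℝ :=
  ENNReal.ofReal α • Measure.dirac (μ + σ / Real.sqrt (2 * α)) +
    ENNReal.ofReal α • Measure.dirac (μ - σ / Real.sqrt (2 * α)) +
    ENNReal.ofReal (1 - 2 * α) • Measure.dirac μ

/-! For a symmetric `Q` with mean `m`, the tails `(-∞, m - t]` and `[m + t, ∞)` have equal mass,
so Chebyshev's inequality gives `Q [m + t, ∞) ≤ Var Q / (2t²)`, and `Q (m, ∞) ≤ 1/2`.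
For `α ≤ 1/2` the set `{pS ≤ α}` is the half-line `[μ + σ/√(2α), ∞)`, on which the first bound
is exactly `α`; for `α > 1/2` it lies in `(μ, ∞)`, where the second bound applies.
The three-point law with atoms `μ ± σ/√(2α)` of mass `α` has variance `σ²` and puts mass `α`
on that half-line, so the bound is attained. -/

namespace IsSymmetricDist

variable {Q : Measure ℝ}

theorem measure_Ioi_eq_measure_Iio [IsProbabilityMeasure Q] (hQ : IsSymmetricDist Q) :
    Q (Ioi (distMean Q)) = Q (Iio (distMean Q)) := by
  have h := hQ 0
  rw [sub_zero, add_zero] at h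
  rw [← compl_Iic, ← compl_Ici, prob_compl_eq_one_sub measurableSet_Iic,
    prob_compl_eq_one_sub measurableSet_Ici, h]

theorem two_mul_measure_Ioi_le_one [IsProbabilityMeasure Q] (hQ : IsSymmetricDist Q) :
    2 * Q (Ioi (distMean Q)) ≤ 1 := by
  have hdisj : Disjoint (Iio (distMean Q)) (Ioi (distMean Q)) :=
    Iio_disjoint_Ioi_of_le le_rfl
  calc 2 * Q (Ioi (distMean Q)) = Q (Iio (distMean Q)) + Q (Ioi (distMean Q)) := by
        rw [two_mul, hQ.measure_Ioi_eq_measure_Iio]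
    _ = Q (Iio (distMean Q) ∪ Ioi (distMean Q)) := (measure_union hdisj measurableSet_Ioi).symm
    _ ≤ 1 := prob_le_one

theorem two_mul_measure_Ici_le (hQ : IsSymmetricDist Q) {t : ℝ} (ht : 0 < t) :
    2 * Q (Ici (distMean Q + t)) ≤ Q {x | t ≤ |x - distMean Q|} := by
  have hdisj : Disjoint (Iic (distMean Q - t)) (Ici (distMean Q + t)) :=
    Iic_disjoint_Ici.mpr (by linarith)
  calc 2 * Q (Ici (distMean Q + t))
      = Q (Iic (distMean Q - t)) + Q (Ici (distMean Q + t)) := by rw [two_mul, hQ t]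
    _ = Q (Iic (distMean Q - t) ∪ Ici (distMean Q + t)) :=
        (measure_union hdisj measurableSet_Ici).symm
    _ ≤ Q {x | t ≤ |x - distMean Q|} := by
        refine measure_mono fun x hx => show t ≤ |x - distMean Q| from ?_
        rcases hx with hx | hx
        · exact le_abs.mpr (Or.inr (by linarith [mem_Iic.mp hx]))
        · exact le_abs.mpr (Or.inl (by linarith [mem_Ici.mp hx]))

theorem two_mul_measure_Ici_le_distVar [IsFiniteMeasure Q] (hQ : IsSymmetricDist Q)
    (h2 : Integrable (fun x => x ^ 2) Q) {t : ℝ} (ht : 0 < t) :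
    2 * Q (Ici (distMean Q + t)) ≤ ENNReal.ofReal (distVar Q / t ^ 2) := by
  have hL2 : MemLp id 2 Q := (memLp_two_iff_integrable_sq aestronglyMeasurable_id).mpr h2
  have hvar : ProbabilityTheory.variance id Q = distVar Q :=
    ProbabilityTheory.variance_eq_integral aemeasurable_id
  calc 2 * Q (Ici (distMean Q + t)) ≤ Q {x | t ≤ |x - distMean Q|} :=
        hQ.two_mul_measure_Ici_le ht
    _ ≤ ENNReal.ofReal (distVar Q / t ^ 2) :=
        hvar ▸ ProbabilityTheory.meas_ge_le_variance_div_sq hL2 ht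

theorem of_map_reflect (hQ : Q.map (fun x => 2 * distMean Q - x) = Q) : IsSymmetricDist Q := by
  intro x
  calc Q (Iic (distMean Q - x))
      = Q.map (fun x => 2 * distMean Q - x) (Iic (distMean Q - x)) := by rw [hQ]
    _ = Q (Ici (distMean Q + x)) := by
        rw [Measure.map_apply (by fun_prop) measurableSet_Iic]
        congr 1
        ext y
        simp only [mem_preimage, mem_Iic, mem_Ici]
        constructor <;> intro h <;> linarith

end IsSymmetricDist

theorem pS_of_le {μ σ x : ℝ} (hσ : 0 ≤ σ) (hx : x ≤ μ) : pS μ σ x = 1 := by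
  have hlt : ¬ 1 ≤ (x - μ) / σ :=
    not_le.mpr ((div_nonpos_of_nonpos_of_nonneg (by linarith) hσ).trans_lt one_pos)
  rw [pS, if_neg hlt, max_eq_right (by linarith)]
  simp

theorem pS_le_iff {μ σ α x : ℝ} (hσ : 0 < σ) (hα : α ∈ Ioc (0 : ℝ) (1 / 2)) :
    pS μ σ x ≤ α ↔ μ + σ / √(2 * α) ≤ x := by
  obtain ⟨hα0, hα⟩ := hα
  have hs : 0 < √(2 * α) := Real.sqrt_pos.mpr (by linarith)
  have hs1 : √(2 * α) ≤ 1 := Real.sqrt_le_one.mpr (by linarith)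
  have hss : √(2 * α) ^ 2 = 2 * α := Real.sq_sqrt (by linarith)
  rw [← le_sub_iff_add_le', div_le_iff₀ hs]
  by_cases hx : σ ≤ x - μ
  · have hy : 0 < x - μ := hσ.trans_le hx
    rw [pS, if_pos ((one_le_div hσ).mpr hx), max_eq_left hy.le,
      div_le_iff₀ (mul_pos two_pos (pow_pos hy 2)),
      ← pow_le_pow_iff_left₀ hσ.le (mul_pos hy hs).le two_ne_zero, mul_pow, hss]
    constructor <;> intro h <;> linarith
  · have hlt : (x - μ) * √(2 * α) < σ := by
      rcases le_or_gt (x - μ) 0 with h | h <;> nlinarith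
    have hmax : max (x - μ) 0 < σ := max_lt (by linarith) hσ
    rw [pS, if_neg (by rwa [one_le_div hσ]), iff_false_intro (not_le.mpr hlt), iff_false, not_le]
    calc α ≤ 1 / 2 := hα
      _ < (1 + max (x - μ) 0 ^ 2 / σ ^ 2)⁻¹ := by
        rw [one_div]
        gcongr
        linarith [(div_lt_one (by positivity)).mpr
          (pow_lt_pow_left₀ hmax (le_max_right _ _) two_ne_zero)]

theorem integrable_ofReal_smul_dirac (f : ℝ → ℝ) (a r : ℝ) :
    Integrable f (ENNReal.ofReal r • Measure.dirac a) :=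
  (integrable_dirac enorm_lt_top).smul_measure ENNReal.ofReal_ne_top

noncomputable def symmThreePoint (m c α : ℝ) : Measure ℝ :=
  ENNReal.ofReal α • Measure.dirac (m + c) + ENNReal.ofReal α • Measure.dirac (m - c) +
    ENNReal.ofReal (1 - 2 * α) • Measure.dirac m

namespace symmThreePoint

variable {m c α : ℝ}

theorem isProbabilityMeasure (hα : α ∈ Icc (0 : ℝ) (1 / 2)) :
    IsProbabilityMeasure (symmThreePoint m c α) := by
  constructor
  simp only [symmThreePoint, Measure.coe_add, Measure.coe_smul, Pi.add_apply, Pi.smul_apply,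
    measure_univ, smul_eq_mul, mul_one]
  rw [← ENNReal.ofReal_add hα.1 hα.1,
    ← ENNReal.ofReal_add (by linarith [hα.1]) (by linarith [hα.2]),
    show α + α + (1 - 2 * α) = 1 by ring, ENNReal.ofReal_one]

theorem integrable (f : ℝ → ℝ) : Integrable f (symmThreePoint m c α) :=
  ((integrable_ofReal_smul_dirac f _ _).add_measure
    (integrable_ofReal_smul_dirac f _ _)).add_measure (integrable_ofReal_smul_dirac f _ _)

theorem integral_eq (hα : α ∈ Icc (0 : ℝ) (1 / 2)) (f : ℝ → ℝ) :
    ∫ x, f x ∂(symmThreePoint m c α) = α * f (m + c) + α * f (m - c) + (1 - 2 * α) * f m := by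
  have hd (a r : ℝ) := integrable_ofReal_smul_dirac f a r
  rw [symmThreePoint, integral_add_measure ((hd _ _).add_measure (hd _ _)) (hd _ _),
    integral_add_measure (hd _ _) (hd _ _)]
  simp only [integral_smul_measure, integral_dirac, smul_eq_mul,
    ENNReal.toReal_ofReal hα.1, ENNReal.toReal_ofReal (by linarith [hα.2] : 0 ≤ 1 - 2 * α)]

theorem distMean_eq (hα : α ∈ Icc (0 : ℝ) (1 / 2)) : distMean (symmThreePoint m c α) = m := by
  rw [distMean, integral_eq hα]
  ring

theorem distVar_eq (hα : α ∈ Icc (0 : ℝ) (1 / 2)) :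
    distVar (symmThreePoint m c α) = 2 * α * c ^ 2 := by
  rw [distVar, distMean_eq hα, integral_eq hα]
  ring

theorem map_reflect : (symmThreePoint m c α).map (fun x => 2 * m - x) = symmThreePoint m c α := by
  have hr : Measurable fun x : ℝ => 2 * m - x := by fun_prop
  simp only [symmThreePoint, Measure.map_add _ _ hr, Measure.map_smul, Measure.map_dirac' hr]
  ring_nf
  rw [add_comm (ENNReal.ofReal α • Measure.dirac (m + c))]

theorem isSymmetricDist (hα : α ∈ Icc (0 : ℝ) (1 / 2)) : IsSymmetricDist (symmThreePoint m c α) :=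
  IsSymmetricDist.of_map_reflect (by rw [distMean_eq hα]; exact map_reflect)

theorem apply_Ici (hc : 0 < c) : symmThreePoint m c α (Ici (m + c)) = ENNReal.ofReal α := by
  have h₁ : m - c ∉ Ici (m + c) := by rw [mem_Ici]; linarith
  have h₂ : m ∉ Ici (m + c) := by rw [mem_Ici]; linarith
  simp [symmThreePoint, Measure.dirac_apply' _ measurableSet_Ici, h₁, h₂]

end symmThreePoint

theorem threePointQ_eq_symmThreePoint (μ σ α : ℝ) :
    threePointQ μ σ α = symmThreePoint μ (σ / √(2 * α)) α := rfl

theorem toReal_measure_pS_le_le {μ σ α : ℝ} {Q : Measure ℝ} (hσ : 0 < σ) (hQ : MemH μ σ Q)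
    (hsym : IsSymmetricDist Q) (hα : α ∈ Ioo (0 : ℝ) 1) :
    (Q {x | pS μ σ x ≤ α}).toReal ≤ α := by
  obtain ⟨hprob, h2, hmean, hvar⟩ := hQ
  rcases le_or_gt α (1 / 2) with hα2 | hα2
  · set c := σ / √(2 * α)
    have hs : 0 < √(2 * α) := Real.sqrt_pos.mpr (by linarith [hα.1])
    have hc : 0 < c := div_pos hσ hs
    have hset : {x | pS μ σ x ≤ α} ⊆ Ici (distMean Q + c) := fun x hx =>
      le_trans (by linarith) ((pS_le_iff hσ ⟨hα.1, hα2⟩).mp hx)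
    have hvar_div : distVar Q / c ^ 2 ≤ 2 * α := by
      have hc2 : c ^ 2 = σ ^ 2 / (2 * α) := by rw [div_pow, Real.sq_sqrt (by linarith [hα.1])]
      rw [div_le_iff₀ (pow_pos hc 2), hc2, mul_div_cancel₀ _ (by linarith [hα.1])]
      exact hvar
    have hmass := ENNReal.toReal_mono ENNReal.ofReal_ne_top
      ((hsym.two_mul_measure_Ici_le_distVar h2 hc).trans (ENNReal.ofReal_le_ofReal hvar_div))
    rw [ENNReal.toReal_mul, ENNReal.toReal_ofReal (by linarith [hα.1])] at hmass
    calc (Q {x | pS μ σ x ≤ α}).toReal ≤ (Q (Ici (distMean Q + c))).toReal :=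
          ENNReal.toReal_mono (measure_ne_top _ _) (measure_mono hset)
      _ ≤ α := by simp only [ENNReal.toReal_ofNat] at hmass; linarith
  · have hset : {x | pS μ σ x ≤ α} ⊆ Ioi (distMean Q) := fun x hx => by
      by_contra hle
      have h1 := pS_of_le (μ := μ) hσ.le ((not_lt.mp hle).trans hmean)
      linarith [hα.2, mem_ofPred_eq.mp hx]
    have hmass := ENNReal.toReal_mono ENNReal.one_ne_top hsym.two_mul_measure_Ioi_le_one
    rw [ENNReal.toReal_mul, ENNReal.toReal_ofNat, ENNReal.toReal_one] at hmass
    calc (Q {x | pS μ σ x ≤ α}).toReal ≤ (Q (Ioi (distMean Q))).toReal :=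
          ENNReal.toReal_mono (measure_ne_top _ _) (measure_mono hset)
      _ ≤ α := by linarith

/-- `pS μ σ` is a semi-precise p-variable for `H_S(μ,σ)`:
(i) valid for all `α ∈ (0,1)`; (ii) for `α ∈ (0,1/2]` the sup of
`Q({pS ≤ α})` over `H_S(μ,σ)` equals `α`, attained by the three-point measure. -/
theorem stmt_9 (μ σ : ℝ) (hσ : 0 < σ) :
    (∀ Q : Measure ℝ, MemH μ σ Q → IsSymmetricDist Q → ∀ α ∈ Ioo (0:ℝ) 1,
      (Q {x | pS μ σ x ≤ α}).toReal ≤ α) ∧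
    (∀ α ∈ Ioc (0:ℝ) (1/2),
      (MemH μ σ (threePointQ μ σ α) ∧ IsSymmetricDist (threePointQ μ σ α) ∧
        ((threePointQ μ σ α) {x | pS μ σ x ≤ α}).toReal = α) ∧
      IsLUB {r : ℝ | ∃ Q : Measure ℝ, MemH μ σ Q ∧ IsSymmetricDist Q ∧
        r = (Q {x | pS μ σ x ≤ α}).toReal} α) := by
  refine ⟨fun Q hQ hsym α hα => toReal_measure_pS_le_le hσ hQ hsym hα, fun α hα => ?_⟩
  have hα' : α ∈ Icc (0 : ℝ) (1 / 2) := Ioc_subset_Icc_self hα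
  have hs : 0 < √(2 * α) := Real.sqrt_pos.mpr (by linarith [hα.1])
  rw [threePointQ_eq_symmThreePoint]
  have hmem : MemH μ σ (symmThreePoint μ (σ / √(2 * α)) α) := by
    refine ⟨symmThreePoint.isProbabilityMeasure hα', symmThreePoint.integrable _,
      (symmThreePoint.distMean_eq hα').le, ?_⟩
    rw [symmThreePoint.distVar_eq hα', div_pow, Real.sq_sqrt (by linarith [hα.1]),
      mul_div_cancel₀ _ (by linarith [hα.1])]
  have hmass : (symmThreePoint μ (σ / √(2 * α)) α {x | pS μ σ x ≤ α}).toReal = α := by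
    rw [show {x | pS μ σ x ≤ α} = Ici (μ + σ / √(2 * α)) from ext fun x => pS_le_iff hσ hα,
      symmThreePoint.apply_Ici (div_pos hσ hs), ENNReal.toReal_ofReal hα'.1]
  have hsym := symmThreePoint.isSymmetricDist (m := μ) (c := σ / √(2 * α)) hα'
  refine ⟨⟨hmem, hsym, hmass⟩, IsGreatest.isLUB ⟨⟨_, hmem, hsym, hmass.symm⟩, ?_⟩⟩
  rintro r ⟨Q, hQ, hsymQ, rfl⟩
  exact toReal_measure_pS_le_le hσ hQ hsymQ ⟨hα.1, by linarith [hα.2]⟩
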